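/- arXiv:2205.12204 — 2 statements merged into one kernel-verified Lean document; each statement's English description precedes it below -/
import Mathlib

section
/- Suppose m satisfies the first-order condition (S/σ)·φ((θ−m)/σ) = C·m and the strict second-order condition m·(m−θ) + σ² > 0. Then m > 0, and any differentiable local solution branch m(θ) of the first-order condition satisfies dm/dθ = m(m−θ) / (m(m−θ) + σ²). In particular: if m > θ then 0 < dm/dθ < 1, and if m ≤ θ then dm/dθ ≤ 0. -/
open MeasureTheory Filter Set

/-- Standard normal probability density function. -/
noncomputable def stdphi (z : ℝ) : ℝ := (Real.sqrt (2 * Real.pi))⁻¹ * Real.exp (-z ^ 2 / 2)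

/-- Standard normal cumulative distribution function. -/
noncomputable def stdPhi (x : ℝ) : ℝ := ∫ t in Set.Iic x, stdphi t

/-!
Differentiating the first-order condition `(S/σ)·φ(z) = C·m`, `z = (θ - m)/σ`, along a solution
branch and using `φ'(z) = -z·φ(z)` gives `-(S/σ)·φ(z)·z·(1 - d)/σ = C·d`. The first-order
condition itself turns `(S/σ)·φ(z)` into `C·m`, which leaves the linear relation
`m(m - θ)(1 - d) = σ²·d` for the slope `d`; the second-order condition makes it solvable for `d`.
-/

open Topology

lemma stdphi_pos (z : ℝ) : 0 < stdphi z := by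
  unfold stdphi
  positivity

lemma hasDerivAt_stdphi (z : ℝ) : HasDerivAt stdphi (-z * stdphi z) z := by
  have hexp : HasDerivAt (fun y : ℝ => -y ^ 2 / 2) (-z) z :=
    ((hasDerivAt_pow 2 z).fun_neg.div_const 2).congr_deriv (by ring)
  rw [stdphi]
  exact (hexp.exp.const_mul _).congr_deriv (by ring)

lemma HasDerivAt.stdphi_comp {f : ℝ → ℝ} {f' x : ℝ} (hf : HasDerivAt f f' x) :
    HasDerivAt (fun y => stdphi (f y)) (-f x * stdphi (f x) * f') x :=
  (hasDerivAt_stdphi (f x)).comp x hf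

lemma pos_of_foc {S C σ z m : ℝ} (hS : 0 < S) (hC : 0 < C) (hσ : 0 < σ)
    (hFOC : S / σ * stdphi z = C * m) : 0 < m :=
  pos_of_mul_pos_right (hFOC ▸ mul_pos (div_pos hS hσ) (stdphi_pos z)) hC.le

lemma foc_branch_slope_relation {S C σ θ d : ℝ} {mf : ℝ → ℝ} (hσ : σ ≠ 0) (hC : C ≠ 0)
    (hmf : HasDerivAt mf d θ)
    (hev : ∀ᶠ θ' in 𝓝 θ, S / σ * stdphi ((θ' - mf θ') / σ) = C * mf θ') :
    mf θ * (mf θ - θ) * (1 - d) = σ ^ 2 * d := by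
  set m := mf θ
  have hFOC : S / σ * stdphi ((θ - m) / σ) = C * m := hev.self_of_nhds
  have hz : HasDerivAt (fun θ' => (θ' - mf θ') / σ) ((1 - d) / σ) θ :=
    ((hasDerivAt_id θ).sub hmf).div_const σ
  have hslope : S / σ * (-((θ - m) / σ) * stdphi ((θ - m) / σ) * ((1 - d) / σ)) = C * d :=
    (hz.stdphi_comp.const_mul (S / σ)).unique ((hmf.const_mul C).congr_of_eventuallyEq hev)
  field_simp at hslope hFOC
  refine mul_left_cancel₀ (mul_ne_zero hσ hC) ?_
  linear_combination hslope + (θ - m) * (1 - d) * hFOC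

lemma eq_div_of_mul_one_sub_eq {a s d : ℝ} (h : a * (1 - d) = s * d) (hne : a + s ≠ 0) :
    d = a / (a + s) := by
  rw [eq_div_iff hne]
  linarith

/-- If `m` satisfies the first-order condition `(S/σ)·φ((θ−m)/σ) = C·m` and the strict
second-order condition `m(m−θ) + σ² > 0`, then `m > 0`, and any differentiable local
solution branch of the FOC through `(θ, m)` has derivative `m(m−θ)/(m(m−θ)+σ²)`;
in particular it lies in `(0,1)` when `m > θ` and is `≤ 0` when `m ≤ θ`. -/
theorem stmt6 (S C σ : ℝ) (hS : 0 < S) (hC : 0 < C) (hσ : 0 < σ)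
    (θ m : ℝ)
    (hFOC : S / σ * stdphi ((θ - m) / σ) = C * m)
    (hSOC : m * (m - θ) + σ ^ 2 > 0) :
    0 < m ∧
    ∀ (mf : ℝ → ℝ) (d : ℝ), mf θ = m → HasDerivAt mf d θ →
      (∀ᶠ θ' in nhds θ, S / σ * stdphi ((θ' - mf θ') / σ) = C * mf θ') →
      d = m * (m - θ) / (m * (m - θ) + σ ^ 2) ∧
      (m > θ → 0 < d ∧ d < 1) ∧
      (m ≤ θ → d ≤ 0) := by
  have hm : 0 < m := pos_of_foc hS hC hσ hFOC
  refine ⟨hm, fun mf d hmfθ hmf hev => ?_⟩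
  have hrel := foc_branch_slope_relation hσ.ne' hC.ne' hmf hev
  rw [hmfθ] at hrel
  have hd := eq_div_of_mul_one_sub_eq hrel hSOC.ne'
  refine ⟨hd, fun hmθ => ?_, fun hmθ => ?_⟩
  · have ha : 0 < m * (m - θ) := mul_pos hm (sub_pos.2 hmθ)
    rw [hd, div_lt_one hSOC]
    exact ⟨by positivity, by linarith [pow_pos hσ 2]⟩
  · rw [hd]
    exact div_nonpos_of_nonpos_of_nonneg
      (mul_nonpos_of_nonneg_of_nonpos hm.le (sub_nonpos.2 hmθ)) hSOC.le
end

section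
/- Suppose for θ in an open interval there are two differentiable FOC-solution branches m₁(θ) < m₂(θ), both satisfying (S/σ)·φ((θ−mᵢ(θ))/σ) = C·mᵢ(θ). Then the payoff gap Δ(θ) = u(m₁(θ); θ) − u(m₂(θ); θ) is strictly increasing in θ, with Δ'(θ) = C·(m₂(θ) − m₁(θ)) > 0. -/
open MeasureTheory Filter Set

lemma stdphi_integrable : Integrable stdphi := by
  have h : stdphi = fun z => (Real.sqrt (2 * Real.pi))⁻¹ * Real.exp (-(1/2 : ℝ) * z ^ 2) := by
    funext z; simp only [stdphi]; ring_nf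
  rw [h]
  exact (integrable_exp_neg_mul_sq (by norm_num)).const_mul _

lemma stdphi_continuous : Continuous stdphi := by
  unfold stdphi; continuity

lemma hasDerivAt_stdPhi (x : ℝ) : HasDerivAt stdPhi (stdphi x) x := by
  have key : stdPhi = fun u => stdPhi 0 + ∫ t in (0:ℝ)..u, stdphi t := by
    funext u
    have := intervalIntegral.integral_Iic_sub_Iic (stdphi_integrable.integrableOn)
      (stdphi_integrable.integrableOn) (a := 0) (b := u)
    simp only [stdPhi]
    linarith [this]
  rw [key]
  have : HasDerivAt (fun u => ∫ t in (0:ℝ)..u, stdphi t) (stdphi x) x :=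
    intervalIntegral.integral_hasDerivAt_right stdphi_integrable.intervalIntegrable
      (stdphi_continuous.stronglyMeasurableAtFilter _ _) stdphi_continuous.continuousAt
  exact this.const_add _

lemma stdphi_neg (z : ℝ) : stdphi (-z) = stdphi z := by simp [stdphi]

lemma stmt9_piece (S C σ : ℝ) (hσ : σ ≠ 0) (m : ℝ → ℝ) (θ d : ℝ)
    (hm : HasDerivAt m d θ)
    (hfoc : S / σ * stdphi ((θ - m θ) / σ) = C * m θ) :
    HasDerivAt (fun θ' => S * stdPhi ((m θ' - θ') / σ) - C / 2 * (m θ') ^ 2)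
      (-(C * m θ)) θ := by
  have h1 : HasDerivAt (fun θ' => (m θ' - θ') / σ) ((d - 1) / σ) θ :=
    (hm.sub (hasDerivAt_id θ)).div_const σ
  have h2 : HasDerivAt (fun θ' => stdPhi ((m θ' - θ') / σ))
      (stdphi ((m θ - θ) / σ) * ((d - 1) / σ)) θ :=
    (hasDerivAt_stdPhi _).comp θ h1
  have h3 := h2.const_mul S
  have h4 : HasDerivAt (fun θ' => C / 2 * (m θ') ^ 2) (C / 2 * (2 * m θ ^ 1 * d)) θ :=
    (hm.pow 2).const_mul (C / 2)
  have h5 := h3.sub h4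
  have heven : stdphi ((m θ - θ) / σ) = stdphi ((θ - m θ) / σ) := by
    rw [← stdphi_neg ((θ - m θ) / σ)]; ring_nf
  have hval : S * (stdphi ((m θ - θ) / σ) * ((d - 1) / σ)) - C / 2 * (2 * m θ ^ 1 * d)
      = -(C * m θ) := by
    rw [heven]
    have : S * (stdphi ((θ - m θ) / σ) * ((d - 1) / σ))
        = (S / σ * stdphi ((θ - m θ) / σ)) * (d - 1) := by field_simp
    rw [this, hfoc]; ring
  rw [hval] at h5
  exact h5

/-- If on an open interval there are two differentiable FOC-solution branches
`m₁(θ) < m₂(θ)`, then the payoff gap `Δ(θ) = u(m₁(θ); θ) − u(m₂(θ); θ)` is strictly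
increasing, with `Δ'(θ) = C·(m₂(θ) − m₁(θ)) > 0`. -/
theorem stmt9 (S C σ : ℝ) (hS : 0 < S) (hC : 0 < C) (hσ : 0 < σ)
    (a b : ℝ) (m₁ m₂ : ℝ → ℝ)
    (hdiff₁ : ∀ θ ∈ Set.Ioo a b, DifferentiableAt ℝ m₁ θ)
    (hdiff₂ : ∀ θ ∈ Set.Ioo a b, DifferentiableAt ℝ m₂ θ)
    (hlt : ∀ θ ∈ Set.Ioo a b, m₁ θ < m₂ θ)
    (hFOC₁ : ∀ θ ∈ Set.Ioo a b, S / σ * stdphi ((θ - m₁ θ) / σ) = C * m₁ θ)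
    (hFOC₂ : ∀ θ ∈ Set.Ioo a b, S / σ * stdphi ((θ - m₂ θ) / σ) = C * m₂ θ) :
    StrictMonoOn
      (fun θ : ℝ =>
        (S * stdPhi ((m₁ θ - θ) / σ) - C / 2 * (m₁ θ) ^ 2) -
          (S * stdPhi ((m₂ θ - θ) / σ) - C / 2 * (m₂ θ) ^ 2))
      (Set.Ioo a b) ∧
    ∀ θ ∈ Set.Ioo a b,
      HasDerivAt
        (fun θ' : ℝ =>
          (S * stdPhi ((m₁ θ' - θ') / σ) - C / 2 * (m₁ θ') ^ 2) -
            (S * stdPhi ((m₂ θ' - θ') / σ) - C / 2 * (m₂ θ') ^ 2))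
        (C * (m₂ θ - m₁ θ)) θ ∧
      0 < C * (m₂ θ - m₁ θ) := by
  have hD : ∀ θ ∈ Set.Ioo a b,
      HasDerivAt
        (fun θ' : ℝ =>
          (S * stdPhi ((m₁ θ' - θ') / σ) - C / 2 * (m₁ θ') ^ 2) -
            (S * stdPhi ((m₂ θ' - θ') / σ) - C / 2 * (m₂ θ') ^ 2))
        (C * (m₂ θ - m₁ θ)) θ := by
    intro θ hθ
    have p1 := stmt9_piece S C σ (ne_of_gt hσ) m₁ θ _ (hdiff₁ θ hθ).hasDerivAt (hFOC₁ θ hθ)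
    have p2 := stmt9_piece S C σ (ne_of_gt hσ) m₂ θ _ (hdiff₂ θ hθ).hasDerivAt (hFOC₂ θ hθ)
    have := p1.sub p2
    have heq : -(C * m₁ θ) - -(C * m₂ θ) = C * (m₂ θ - m₁ θ) := by ring
    rwa [heq] at this
  have hpos : ∀ θ ∈ Set.Ioo a b, 0 < C * (m₂ θ - m₁ θ) := fun θ hθ =>
    mul_pos hC (sub_pos.mpr (hlt θ hθ))
  refine ⟨?_, fun θ hθ => ⟨hD θ hθ, hpos θ hθ⟩⟩
  apply strictMonoOn_of_deriv_pos (convex_Ioo a b)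
  · exact fun x hx => ((hD x hx).differentiableAt.continuousAt).continuousWithinAt
  · intro x hx
    rw [interior_Ioo] at hx
    rw [(hD x hx).deriv]
    exact hpos x hx
end
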